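/- arXiv:1210.3204 — 3 statements merged into one kernel-verified Lean document; each statement's English description precedes it below -/
import Mathlib

section
/- Let 2 ≤ r ≤ d be integers and let A = SV_d^{(r)} be the squarefree Veronese configuration whose columns are all 0/1-vectors in ℤ^d with coordinate sum r. Then the toric ideal I_A is generated by the set C_A^{sf,sf} of circuits both of whose monomials are squarefree. -/
open MvPolynomial

/-- The binomial `X^u - X^v`. -/
noncomputable def binom {σ : Type*} (K : Type*) [Field K] (u v : σ →₀ ℕ) :
    MvPolynomial σ K :=
  MvPolynomial.monomial u 1 - MvPolynomial.monomial v 1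

/-- A binomial `X^u - X^v` with `u ≠ v`. -/
def IsBinomial {σ K : Type*} [Field K] (f : MvPolynomial σ K) : Prop :=
  ∃ u v : σ →₀ ℕ, u ≠ v ∧ f = binom K u v

/-- An exponent vector is squarefree if every entry is at most one. -/
def SqfreeExp {σ : Type*} (u : σ →₀ ℕ) : Prop := ∀ i, u i ≤ 1

/-- `f` is a circuit of the ideal `I`: an irreducible binomial in `I` such that no
binomial of `I` has support (set of variables) properly contained in that of `f`. -/
def IsCircuit {σ K : Type*} [Field K] (I : Ideal (MvPolynomial σ K))
    (f : MvPolynomial σ K) : Prop :=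
  IsBinomial f ∧ f ∈ I ∧ Irreducible f ∧
    ∀ g ∈ I, IsBinomial g → ¬ (g.vars ⊂ f.vars)

/-- The set `C_A` of circuits of `I`. -/
def Circuits {σ : Type*} (K : Type*) [Field K] (I : Ideal (MvPolynomial σ K)) :
    Set (MvPolynomial σ K) :=
  {f | IsCircuit I f}

/-- The set `C_A^sf` of circuits of `I` having at least one squarefree monomial. -/
def CircuitsSF {σ : Type*} (K : Type*) [Field K] (I : Ideal (MvPolynomial σ K)) :
    Set (MvPolynomial σ K) :=
  {f | IsCircuit I f ∧
    ∃ u v : σ →₀ ℕ, u ≠ v ∧ f = binom K u v ∧ (SqfreeExp u ∨ SqfreeExp v)}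

/-- The set `C_A^{sf,sf}` of circuits of `I` both of whose monomials are squarefree. -/
def CircuitsSFSF {σ : Type*} (K : Type*) [Field K] (I : Ideal (MvPolynomial σ K)) :
    Set (MvPolynomial σ K) :=
  {f | IsCircuit I f ∧
    ∃ u v : σ →₀ ℕ, u ≠ v ∧ f = binom K u v ∧ (SqfreeExp u ∧ SqfreeExp v)}

/-- The monomial map `x_j ↦ t^{a_j}` into the Laurent polynomial ring
`K[t_1^{±1},…,t_d^{±1}] = K[ℤ^d]`, where `a_j` is the `j`-th column of `A`. -/
noncomputable def toricMap (K : Type*) [Field K] {d : ℕ} {ι : Type*}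
    (A : Matrix (Fin d) ι ℤ) :
    MvPolynomial ι K →ₐ[K] AddMonoidAlgebra K (Fin d → ℤ) :=
  MvPolynomial.aeval fun j => AddMonoidAlgebra.single (fun i => A i j) (1 : K)

/-- The toric ideal `I_A` of the configuration `A`. -/
noncomputable def toricIdeal (K : Type*) [Field K] {d : ℕ} {ι : Type*}
    (A : Matrix (Fin d) ι ℤ) : Ideal (MvPolynomial ι K) :=
  RingHom.ker (toricMap K A).toRingHom

/-- `A` is a configuration: its columns are pairwise distinct and lie on a common
affine hyperplane not passing through the origin. -/
structure IsConfiguration {d : ℕ} {ι : Type*} (A : Matrix (Fin d) ι ℤ) : Prop where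
  injective : Function.Injective fun j i => A i j
  hyperplane : ∃ w : Fin d → ℚ, ∀ j, (∑ i, w i * (A i j : ℚ)) = 1

/-- The `r`-th squarefree Veronese configuration: columns are the 0/1-vectors in `ℤ^d`
with coordinate sum `r`, indexed by the `r`-subsets of `Fin d`. -/
def SVconfig (d r : ℕ) : Matrix (Fin d) {s : Finset (Fin d) // s.card = r} ℤ :=
  fun i s => if i ∈ s.1 then 1 else 0

/-!
Every binomial `X^u - X^v` with `u` and `v` of equal `A`-degree is a sum of monomial multiples of
exchange quadrics `x_{T₁} x_{T₂} - x_{T₁'} x_{T₂'}`, where `T₁' = T₁ ∪ {a} \ {b}` and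
`T₂' = T₂ ∪ {b} \ {a}` for `a ∈ T₂ \ T₁`, `b ∈ T₁ \ T₂`. Such a quadric is either `0` (when
`T₁' = T₂`) or a circuit with squarefree monomials: it is irreducible, being a primitive linear
polynomial in `x_{T₁}`, and three coordinates `a`, `b`, `c ∈ T₁ \ (T₂ ∪ {b})` show that any three
of its columns are linearly independent. Given `S` in the support of `u`, exchanges inside `v`
raise the maximal overlap `|S ∩ T|`, `T ∈ supp v`, until `S` itself occurs in `v`; then `x_S`
cancels and we induct on the degree. Since every toric ideal is spanned by such binomials, this
proves the theorem.
-/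

section Binomial
variable {σ K : Type*} [Field K]

theorem support_binom [DecidableEq σ] {u v : σ →₀ ℕ} (h : u ≠ v) :
    (binom K u v).support = {u, v} := by
  ext w
  rw [mem_support_iff, binom, coeff_sub, coeff_monomial, coeff_monomial]
  by_cases hu : u = w <;> by_cases hv : v = w <;> grind

theorem vars_binom [DecidableEq σ] {u v : σ →₀ ℕ} (h : u ≠ v) :
    (binom K u v).vars = u.support ∪ v.support := by
  ext i
  simp [mem_vars_iff_mem_support, support_binom h]

theorem support_sub_C_mul_binom_subset [DecidableEq σ] {f : MvPolynomial σ K} {u v : σ →₀ ℕ}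
    (hvu : v ≠ u) (hv : v ∈ f.support) :
    (f - C (coeff u f) * binom K u v).support ⊆ f.support.erase u := by
  intro w hw
  rw [mem_support_iff, coeff_sub, coeff_C_mul, binom, coeff_sub, coeff_monomial,
    coeff_monomial] at hw
  rcases eq_or_ne w u with rfl | hwu
  · simp [hvu] at hw
  rcases eq_or_ne w v with rfl | hwv
  · exact Finset.mem_erase.mpr ⟨hwu, hv⟩
  · exact Finset.mem_erase.mpr
      ⟨hwu, mem_support_iff.mpr (by simpa [hwu.symm, hwv.symm] using hw)⟩

theorem binom_single_add_single (a b c e : σ) :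
    binom K (Finsupp.single a 1 + Finsupp.single b 1) (Finsupp.single c 1 + Finsupp.single e 1) =
      X a * X b - X c * X e := by
  simp [binom, X, monomial_mul]

theorem sqfreeExp_single_add_single {a b : σ} (h : a ≠ b) :
    SqfreeExp (Finsupp.single a 1 + Finsupp.single b 1) := by
  classical
  intro i
  simp only [Finsupp.add_apply, Finsupp.single_apply]
  split_ifs <;> simp_all

theorem exists_eq_single_add {v : σ →₀ ℕ} {a : σ} (ha : a ∈ v.support) :
    ∃ w, v = Finsupp.single a 1 + w :=
  exists_add_of_le (Finsupp.single_le_iff.mpr (Nat.one_le_iff_ne_zero.mpr (by simpa using ha)))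

theorem exists_eq_add_single_add_single {v : σ →₀ ℕ} {a b : σ} (ha : a ∈ v.support)
    (hb : b ∈ v.support) (hab : a ≠ b) :
    ∃ w, v = w + (Finsupp.single a 1 + Finsupp.single b 1) := by
  classical
  have hle : Finsupp.single a 1 + Finsupp.single b 1 ≤ v := fun i => by
    simp only [Finsupp.mem_support_iff] at ha hb
    simp only [Finsupp.add_apply, Finsupp.single_apply]
    split_ifs <;> subst_vars <;> first | exact absurd rfl hab | omega
  obtain ⟨w, hw⟩ := exists_add_of_le hle
  exact ⟨w, hw.trans (add_comm _ _)⟩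

def BinomRel (J : Ideal (MvPolynomial σ K)) (u v : σ →₀ ℕ) : Prop :=
  binom K u v ∈ J

namespace BinomRel
variable {J : Ideal (MvPolynomial σ K)} {u v w : σ →₀ ℕ}

@[refl] theorem refl (u : σ →₀ ℕ) : BinomRel J u u := by
  simp [BinomRel, binom]

@[symm] theorem symm (h : BinomRel J u v) : BinomRel J v u := by
  rw [BinomRel, binom, ← neg_sub]
  exact neg_mem h

@[trans] theorem trans (h₁ : BinomRel J u v) (h₂ : BinomRel J v w) : BinomRel J u w := by
  rw [BinomRel, binom, ← sub_add_sub_cancel _ (monomial v 1)]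
  exact add_mem h₁ h₂

theorem add_left (w : σ →₀ ℕ) (h : BinomRel J u v) : BinomRel J (w + u) (w + v) := by
  rw [BinomRel, binom, ← one_mul (1 : K), ← monomial_mul, ← monomial_mul, ← mul_sub]
  exact J.mul_mem_left _ h

end BinomRel

end Binomial

section Irreducible
variable {R τ : Type*} [CommRing R] [IsDomain R]

theorem isRelPrime_X_X_mul_X {b c e : τ} (hbc : b ≠ c) (hbe : b ≠ e) :
    IsRelPrime (X b : MvPolynomial τ R) (X c * X e) := by
  rw [X_prime.irreducible.isRelPrime_iff_not_dvd, X_prime.dvd_mul, X_dvd_X, X_dvd_X]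
  tauto

theorem irreducible_X_mul_X_sub_X_mul_X {a b c e : τ} (hab : a ≠ b) (hac : a ≠ c)
    (hae : a ≠ e) (hbc : b ≠ c) (hbe : b ≠ e) :
    Irreducible (X a * X b - X c * X e : MvPolynomial τ R) := by
  classical
  let φ := (renameEquiv R (Equiv.optionSubtypeNe a).symm).trans
    (optionEquivLeft R {x : τ // x ≠ a})
  have hφa : φ (X a) = Polynomial.X := by
    simp [φ, optionEquivLeft_X_none]
  have hφ (x : τ) (hx : x ≠ a) : φ (X x) = Polynomial.C (X ⟨x, hx⟩) := by
    simp [φ, Equiv.optionSubtypeNe_symm_of_ne hx, optionEquivLeft_X_some]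
  have himage : φ (X a * X b - X c * X e) = Polynomial.C (X ⟨b, hab.symm⟩) * Polynomial.X +
      Polynomial.C (-(X ⟨c, hac.symm⟩ * X ⟨e, hae.symm⟩)) := by
    rw [map_sub, map_mul, map_mul, hφa, hφ b hab.symm, hφ c hac.symm, hφ e hae.symm, map_neg,
      map_mul]
    ring
  rw [← MulEquiv.irreducible_iff φ.toMulEquiv]
  change Irreducible (φ _)
  rw [himage]
  refine Polynomial.irreducible_C_mul_X_add_C (X_ne_zero _) ?_
  exact (isRelPrime_X_X_mul_X (fun h => hbc (congrArg Subtype.val h))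
    (fun h => hbe (congrArg Subtype.val h))).neg_right

end Irreducible

section Toric
variable {K : Type*} [Field K] {d : ℕ} {ι : Type*} (A : Matrix (Fin d) ι ℤ)

noncomputable def toricDeg : (ι →₀ ℕ) →ₗ[ℕ] (Fin d → ℤ) :=
  Finsupp.linearCombination ℕ fun j i => A i j

theorem toricDeg_apply_of_support_subset {u : ι →₀ ℕ} {s : Finset ι} (hs : u.support ⊆ s)
    (i : Fin d) : toricDeg A u i = ∑ j ∈ s, (u j : ℤ) * A i j := by
  rw [toricDeg, Finsupp.linearCombination_apply, Finsupp.sum_of_support_subset u hs _ (by simp)]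
  simp [Finset.sum_apply, nsmul_eq_mul]

theorem toricMap_monomial (u : ι →₀ ℕ) (c : K) :
    toricMap K A (monomial u c) = AddMonoidAlgebra.single (toricDeg A u) c := by
  induction u using Finsupp.induction generalizing c with
  | zero => simp [toricMap]
  | single_add j n u _ _ ih =>
    rw [← one_mul c, ← monomial_mul, map_mul, ih, map_add, ← X_pow_eq_monomial, map_pow,
      toricMap, aeval_X, AddMonoidAlgebra.single_pow, AddMonoidAlgebra.single_mul_single]
    simp [toricDeg]

theorem mem_toricIdeal_iff {f : MvPolynomial ι K} : f ∈ toricIdeal K A ↔ toricMap K A f = 0 :=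
  RingHom.mem_ker

theorem coeff_toricMap (f : MvPolynomial ι K) (m : Fin d → ℤ) :
    (toricMap K A f).coeff m = ∑ u ∈ f.support with toricDeg A u = m, coeff u f := by
  conv_lhs => rw [f.as_sum]
  simp only [map_sum, toricMap_monomial, AddMonoidAlgebra.coeff_sum,
    AddMonoidAlgebra.coeff_single, Finsupp.finsetSum_apply, Finsupp.single_apply,
    Finset.sum_filter]

theorem binom_mem_toricIdeal_iff {u v : ι →₀ ℕ} :
    binom K u v ∈ toricIdeal K A ↔ toricDeg A u = toricDeg A v := by
  rw [mem_toricIdeal_iff, binom, map_sub, toricMap_monomial, toricMap_monomial, sub_eq_zero,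
    AddMonoidAlgebra.single_left_inj one_ne_zero]

theorem exists_toricDeg_eq_of_mem_support {f : MvPolynomial ι K} (hf : f ∈ toricIdeal K A)
    {u : ι →₀ ℕ} (hu : u ∈ f.support) :
    ∃ v ∈ f.support, v ≠ u ∧ toricDeg A v = toricDeg A u := by
  by_contra! h
  have hfiber := coeff_toricMap A f (toricDeg A u)
  rw [(mem_toricIdeal_iff A).mp hf, Finset.sum_eq_single_of_mem u (by simp [hu])
    fun v hv hvu => absurd (Finset.mem_filter.mp hv).2 (h v (Finset.mem_filter.mp hv).1 hvu)]
    at hfiber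
  exact mem_support_iff.mp hu (by simpa using hfiber.symm)

theorem toricIdeal_le_span_binom :
    toricIdeal K A ≤ Ideal.span {f | ∃ u v, toricDeg A u = toricDeg A v ∧ f = binom K u v} := by
  classical
  intro f hf
  induction hn : f.support.card using Nat.strong_induction_on generalizing f with
  | _ n ih =>
  obtain rfl | ⟨u, hu⟩ := eq_or_ne f 0 |>.imp id support_nonempty.mpr
  · exact zero_mem _
  obtain ⟨v, hv, hvu, hdeg⟩ := exists_toricDeg_eq_of_mem_support A hf hu
  have hbinom : binom K u v ∈ toricIdeal K A := (binom_mem_toricIdeal_iff A).mpr hdeg.symm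
  have hsmaller : (f - C (coeff u f) * binom K u v).support.card < n :=
    hn ▸ (Finset.card_le_card (support_sub_C_mul_binom_subset hvu hv)).trans_lt
      (Finset.card_erase_lt_of_mem hu)
  have hrest := ih _ hsmaller (sub_mem hf (Ideal.mul_mem_left _ _ hbinom)) rfl
  rw [← sub_add_cancel f (C (coeff u f) * binom K u v)]
  exact add_mem hrest (Ideal.mul_mem_left _ _ (Ideal.subset_span ⟨u, v, hdeg.symm, rfl⟩))

end Toric

abbrev SVCol (d r : ℕ) := {s : Finset (Fin d) // s.card = r}

section VeroneseDegree
variable {d r : ℕ}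

theorem toricDeg_SV_apply (u : SVCol d r →₀ ℕ) (i : Fin d) :
    toricDeg (SVconfig d r) u i = ∑ T ∈ u.support, if i ∈ T.1 then (u T : ℤ) else 0 := by
  simp [toricDeg_apply_of_support_subset _ subset_rfl, SVconfig]

theorem exists_mem_support_of_toricDeg_SV_eq {u v : SVCol d r →₀ ℕ}
    (h : toricDeg (SVconfig d r) u = toricDeg (SVconfig d r) v) {S : SVCol d r}
    (hS : S ∈ u.support) {i : Fin d} (hi : i ∈ S.1) : ∃ T ∈ v.support, i ∈ T.1 := by
  have hpos : 0 < toricDeg (SVconfig d r) u i := by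
    rw [toricDeg_SV_apply]
    refine lt_of_lt_of_le ?_ (Finset.single_le_sum (fun T _ => ?_) hS)
    · simpa [hi, Nat.pos_iff_ne_zero] using hS
    · split_ifs <;> positivity
  rw [h, toricDeg_SV_apply] at hpos
  obtain ⟨T, hT, hne⟩ := Finset.exists_ne_zero_of_sum_ne_zero hpos.ne'
  exact ⟨T, hT, by_contra fun hiT => hne (if_neg hiT)⟩

theorem sum_toricDeg_SV (u : SVCol d r →₀ ℕ) :
    ∑ i, toricDeg (SVconfig d r) u i = r * u.degree := by
  simp_rw [toricDeg_SV_apply]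
  rw [Finset.sum_comm, Finsupp.degree_apply, Nat.cast_sum, Finset.mul_sum]
  refine Finset.sum_congr rfl fun T _ => ?_
  rw [Finset.sum_ite_mem, Finset.univ_inter, Finset.sum_const, T.2, nsmul_eq_mul]

theorem degree_eq_of_toricDeg_SV_eq (hr : 0 < r) {u v : SVCol d r →₀ ℕ}
    (h : toricDeg (SVconfig d r) u = toricDeg (SVconfig d r) v) : u.degree = v.degree := by
  have := sum_toricDeg_SV u
  rw [h, sum_toricDeg_SV] at this
  exact_mod_cast (mul_left_cancel₀ (by positivity) this).symm

theorem toricDeg_SV_apply_eq_degree_iff (u : SVCol d r →₀ ℕ) (j : Fin d) :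
    toricDeg (SVconfig d r) u j = u.degree ↔ ∀ T ∈ u.support, j ∈ T.1 := by
  rw [toricDeg_SV_apply, Finsupp.degree_apply, Nat.cast_sum,
    Finset.sum_eq_sum_iff_of_le fun T _ => by split_ifs <;> simp]
  refine forall₂_congr fun T hT => ?_
  have : (u T : ℤ) ≠ 0 := by simpa using hT
  split_ifs with hj <;> simp [hj, this.symm]

theorem forall_mem_of_toricDeg_SV_eq (hr : 0 < r) {u v : SVCol d r →₀ ℕ}
    (h : toricDeg (SVconfig d r) u = toricDeg (SVconfig d r) v) {j : Fin d}
    (hv : ∀ T ∈ v.support, j ∈ T.1) : ∀ T ∈ u.support, j ∈ T.1 := by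
  rw [← toricDeg_SV_apply_eq_degree_iff, h, degree_eq_of_toricDeg_SV_eq hr h]
  exact (toricDeg_SV_apply_eq_degree_iff v j).mpr hv

end VeroneseDegree

noncomputable abbrev sfsfSpan (K : Type*) [Field K] (d r : ℕ) :
    Ideal (MvPolynomial (SVCol d r) K) :=
  Ideal.span (CircuitsSFSF K (toricIdeal K (SVconfig d r)))

section Span
variable {K : Type*} [Field K] {d r : ℕ}

theorem sfsfSpan_le_toricIdeal : sfsfSpan K d r ≤ toricIdeal K (SVconfig d r) :=
  Ideal.span_le.mpr fun _ hf => hf.1.2.1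

theorem toricDeg_eq_of_binomRel {u v : SVCol d r →₀ ℕ} (h : BinomRel (sfsfSpan K d r) u v) :
    toricDeg (SVconfig d r) u = toricDeg (SVconfig d r) v :=
  (binom_mem_toricIdeal_iff _).mp (sfsfSpan_le_toricIdeal h)

end Span

section Exchange
variable {d r : ℕ}

def exchange (T : SVCol d r) {a b : Fin d} (ha : a ∉ T.1) (hb : b ∈ T.1) : SVCol d r :=
  ⟨insert a (T.1.erase b), by
    rw [Finset.card_insert_of_notMem (by simp [ha]), Finset.card_erase_of_mem hb, T.2]
    have := T.2 ▸ Finset.card_pos.mpr ⟨b, hb⟩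
    omega⟩

theorem exists_mem_notMem_of_ne {T T' : SVCol d r} (h : T ≠ T') : ∃ x ∈ T.1, x ∉ T'.1 := by
  by_contra! hsub
  exact h (Subtype.ext (Finset.eq_of_subset_of_card_le hsub (by rw [T.2, T'.2])))

section Membership
variable {T : SVCol d r} {a b x : Fin d} {ha : a ∉ T.1} {hb : b ∈ T.1}

theorem mem_exchange : x ∈ (exchange T ha hb).1 ↔ x = a ∨ x ≠ b ∧ x ∈ T.1 := by
  simp [exchange]

theorem mem_exchange_self : a ∈ (exchange T ha hb).1 :=
  mem_exchange.mpr (Or.inl rfl)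

theorem notMem_exchange_self : b ∉ (exchange T ha hb).1 := by
  simp [mem_exchange, ne_of_mem_of_not_mem hb ha]

theorem mem_exchange_of_mem (hx : x ∈ T.1) (hxb : x ≠ b) : x ∈ (exchange T ha hb).1 :=
  mem_exchange.mpr (Or.inr ⟨hxb, hx⟩)

theorem notMem_exchange_of_notMem (hx : x ∉ T.1) (hxa : x ≠ a) : x ∉ (exchange T ha hb).1 := by
  simp [mem_exchange, hx, hxa]

end Membership

variable {T₁ T₂ : SVCol d r} {a b : Fin d} (ha₁ : a ∉ T₁.1) (ha₂ : a ∈ T₂.1) (hb₁ : b ∈ T₁.1)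
  (hb₂ : b ∉ T₂.1)

theorem toricDeg_exchange :
    toricDeg (SVconfig d r) (Finsupp.single T₁ 1 + Finsupp.single T₂ 1) =
      toricDeg (SVconfig d r)
        (Finsupp.single (exchange T₁ ha₁ hb₁) 1 + Finsupp.single (exchange T₂ hb₂ ha₂) 1) := by
  funext i
  simp only [map_add, toricDeg, Finsupp.linearCombination_single, one_smul, Pi.add_apply,
    SVconfig, mem_exchange]
  by_cases hia : i = a <;> by_cases hib : i = b <;> subst_vars <;> simp_all

variable {c : Fin d} (hc₁ : c ∈ T₁.1) (hc₂ : c ∉ T₂.1) (hcb : c ≠ b)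

include ha₂ hb₂ hc₁ hc₂ hcb in
theorem exchange_pairwise_ne :
    T₁ ≠ T₂ ∧ T₁ ≠ exchange T₁ ha₁ hb₁ ∧ T₁ ≠ exchange T₂ hb₂ ha₂ ∧
      T₂ ≠ exchange T₁ ha₁ hb₁ ∧ T₂ ≠ exchange T₂ hb₂ ha₂ ∧
      exchange T₁ ha₁ hb₁ ≠ exchange T₂ hb₂ ha₂ := by
  have hne {T T' : SVCol d r} {x : Fin d} (hx : x ∈ T.1) (hx' : x ∉ T'.1) : T ≠ T' :=
    ne_of_apply_ne Subtype.val (ne_of_mem_of_not_mem' hx hx')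
  exact ⟨hne hb₁ hb₂, hne hb₁ notMem_exchange_self,
    hne hc₁ (notMem_exchange_of_notMem hc₂ hcb), (hne (mem_exchange_of_mem hc₁ hcb) hc₂).symm,
    hne ha₂ notMem_exchange_self, hne mem_exchange_self notMem_exchange_self⟩

include hc₁ hc₂ hcb in
/-- At the coordinates `a`, `b`, `c` every integer relation among the four columns is seen to be a
multiple of `T₁ + T₂ - T₁' - T₂'`, so it vanishes as soon as one of its coefficients does. -/
theorem eq_of_toricDeg_eq_of_support_ssubset {u v : SVCol d r →₀ ℕ}
    (h : toricDeg (SVconfig d r) u = toricDeg (SVconfig d r) v)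
    (hs : u.support ∪ v.support ⊂ {T₁, T₂, exchange T₁ ha₁ hb₁, exchange T₂ hb₂ ha₂}) :
    u = v := by
  obtain ⟨h12, h1P, h1Q, h2P, h2Q, hPQ⟩ := exchange_pairwise_ne ha₁ ha₂ hb₁ hb₂ hc₁ hc₂ hcb
  have haP : a ∈ (exchange T₁ ha₁ hb₁).1 := mem_exchange_self
  have hbP : b ∉ (exchange T₁ ha₁ hb₁).1 := notMem_exchange_self
  have hcP : c ∈ (exchange T₁ ha₁ hb₁).1 := mem_exchange_of_mem hc₁ hcb
  have haQ : a ∉ (exchange T₂ hb₂ ha₂).1 := notMem_exchange_self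
  have hbQ : b ∈ (exchange T₂ hb₂ ha₂).1 := mem_exchange_self
  have hcQ : c ∉ (exchange T₂ hb₂ ha₂).1 := notMem_exchange_of_notMem hc₂ hcb
  set P := exchange T₁ ha₁ hb₁
  set Q := exchange T₂ hb₂ ha₂
  set s : Finset (SVCol d r) := {T₁, T₂, P, Q}
  have expand (w : SVCol d r →₀ ℕ) (hw : w.support ⊆ s) (x : Fin d) :
      toricDeg (SVconfig d r) w x = (if x ∈ T₁.1 then (w T₁ : ℤ) else 0) +
        (if x ∈ T₂.1 then (w T₂ : ℤ) else 0) + (if x ∈ P.1 then (w P : ℤ) else 0) +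
        (if x ∈ Q.1 then (w Q : ℤ) else 0) := by
    rw [toricDeg_apply_of_support_subset _ hw, Finset.sum_insert (by simp [h12, h1P, h1Q]),
      Finset.sum_insert (by simp [h2P, h2Q]), Finset.sum_pair hPQ]
    simp only [SVconfig, mul_ite, mul_one, mul_zero, add_assoc]
  have hu : u.support ⊆ s := Finset.subset_union_left.trans hs.subset
  have hv : v.support ⊆ s := Finset.subset_union_right.trans hs.subset
  have ea := congrFun h a
  have eb := congrFun h b
  have ec := congrFun h c
  rw [expand u hu, expand v hv] at ea eb ec
  simp only [ha₁, ha₂, hb₁, hb₂, hc₁, hc₂, haP, hbP, hcP, haQ, hbQ, hcQ, if_true, if_false,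
    zero_add, add_zero] at ea eb ec
  obtain ⟨x, hx, hxuv⟩ := Finset.exists_of_ssubset hs
  have hux : u x = 0 := Finsupp.notMem_support_iff.mp fun h => hxuv (Finset.mem_union_left _ h)
  have hvx : v x = 0 := Finsupp.notMem_support_iff.mp fun h => hxuv (Finset.mem_union_right _ h)
  have heq : ∀ T ∈ s, u T = v T := by
    simp only [s, Finset.mem_insert, Finset.mem_singleton] at hx ⊢
    rintro T (rfl | rfl | rfl | rfl) <;> rcases hx with rfl | rfl | rfl | rfl <;> omega
  ext T
  by_cases hT : T ∈ s
  · exact heq T hT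
  · rw [Finsupp.notMem_support_iff.mp fun h => hT (hu h),
      Finsupp.notMem_support_iff.mp fun h => hT (hv h)]

include hc₁ hc₂ hcb in
theorem binom_exchange_mem_circuitsSFSF (K : Type*) [Field K] :
    binom K (Finsupp.single T₁ 1 + Finsupp.single T₂ 1)
        (Finsupp.single (exchange T₁ ha₁ hb₁) 1 + Finsupp.single (exchange T₂ hb₂ ha₂) 1) ∈
      CircuitsSFSF K (toricIdeal K (SVconfig d r)) := by
  obtain ⟨h12, h1P, h1Q, h2P, h2Q, hPQ⟩ := exchange_pairwise_ne ha₁ ha₂ hb₁ hb₂ hc₁ hc₂ hcb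
  have huv : Finsupp.single T₁ 1 + Finsupp.single T₂ 1 ≠
      Finsupp.single (exchange T₁ ha₁ hb₁) 1 + Finsupp.single (exchange T₂ hb₂ ha₂) 1 :=
    fun h => by simpa [Finsupp.single_apply, h1P, h1Q, h12] using congrArg (· T₁) h
  refine ⟨⟨⟨_, _, huv, rfl⟩, (binom_mem_toricIdeal_iff _).mpr (toricDeg_exchange ha₁ ha₂ hb₁ hb₂),
    ?_, ?_⟩, _, _, huv, rfl, sqfreeExp_single_add_single h12, sqfreeExp_single_add_single hPQ⟩
  · rw [binom_single_add_single]
    exact irreducible_X_mul_X_sub_X_mul_X h12 h1P h1Q h2P h2Q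
  · rintro g hg ⟨u, v, hne, rfl⟩ hss
    rw [vars_binom hne, vars_binom huv, Finsupp.support_single_add_single h12 one_ne_zero
      one_ne_zero, Finsupp.support_single_add_single hPQ one_ne_zero one_ne_zero] at hss
    exact hne (eq_of_toricDeg_eq_of_support_ssubset ha₁ ha₂ hb₁ hb₂ hc₁ hc₂ hcb
      ((binom_mem_toricIdeal_iff _).mp hg)
      (by rwa [Finset.insert_union, Finset.singleton_union] at hss))

include ha₂ hb₂ in
/-- When `T₁ \ T₂ = {b}` the exchange just swaps `T₁` and `T₂`; otherwise it is a circuit. -/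
theorem binomRel_exchange {K : Type*} [Field K] :
    BinomRel (sfsfSpan K d r) (Finsupp.single T₁ 1 + Finsupp.single T₂ 1)
      (Finsupp.single (exchange T₁ ha₁ hb₁) 1 + Finsupp.single (exchange T₂ hb₂ ha₂) 1) := by
  by_cases hsub : (exchange T₁ ha₁ hb₁).1 ⊆ T₂.1
  · have hP : exchange T₁ ha₁ hb₁ = T₂ :=
      Subtype.ext (Finset.eq_of_subset_of_card_le hsub (by rw [T₂.2, (exchange T₁ ha₁ hb₁).2]))
    have hQ : exchange T₂ hb₂ ha₂ = T₁ := by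
      refine Subtype.ext ?_
      change insert b (T₂.1.erase a) = T₁.1
      rw [← hP, exchange, Finset.erase_insert (by simp [ha₁]), Finset.insert_erase hb₁]
    rw [hP, hQ, add_comm]
  · obtain ⟨c, hcP, hc₂⟩ := Finset.not_subset.mp hsub
    have hca : c ≠ a := ne_of_mem_of_not_mem ha₂ hc₂ |>.symm
    obtain ⟨hcb, hc₁⟩ := (mem_exchange.mp hcP).resolve_left hca
    exact Ideal.subset_span (binom_exchange_mem_circuitsSFSF ha₁ ha₂ hb₁ hb₂ hc₁ hc₂ hcb K)

end Exchange

section Moves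
variable {K : Type*} [Field K] {d r : ℕ}

theorem exists_binomRel_exchange {v : SVCol d r →₀ ℕ} {T₁ T₂ : SVCol d r} {a b : Fin d}
    (ha₁ : a ∉ T₁.1) (ha₂ : a ∈ T₂.1) (hb₁ : b ∈ T₁.1) (hb₂ : b ∉ T₂.1)
    (hT₁ : T₁ ∈ v.support) (hT₂ : T₂ ∈ v.support) :
    ∃ v', BinomRel (sfsfSpan K d r) v v' ∧ exchange T₁ ha₁ hb₁ ∈ v'.support ∧
      ∀ T ∈ v.support, T ≠ T₁ → T ≠ T₂ → T ∈ v'.support := by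
  obtain ⟨w, rfl⟩ := exists_eq_add_single_add_single hT₁ hT₂ fun h => hb₂ (h ▸ hb₁)
  refine ⟨w + (Finsupp.single (exchange T₁ ha₁ hb₁) 1 + Finsupp.single (exchange T₂ hb₂ ha₂) 1),
    (binomRel_exchange ha₁ ha₂ hb₁ hb₂).add_left w, by simp, fun T hT hT₁ hT₂ => ?_⟩
  simp only [Finsupp.mem_support_iff, Finsupp.add_apply, Finsupp.single_apply, Ne.symm hT₁,
    Ne.symm hT₂, if_false, add_zero] at hT ⊢
  omega

noncomputable def maxOverlap (S : SVCol d r) (v : SVCol d r →₀ ℕ) : ℕ :=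
  v.support.sup fun T => (S.1 ∩ T.1).card

theorem maxOverlap_le (S : SVCol d r) (v : SVCol d r →₀ ℕ) : maxOverlap S v ≤ r :=
  Finset.sup_le fun _ _ => (Finset.card_le_card Finset.inter_subset_left).trans S.2.le

theorem card_inter_le_maxOverlap {S T : SVCol d r} {v : SVCol d r →₀ ℕ} (hT : T ∈ v.support) :
    (S.1 ∩ T.1).card ≤ maxOverlap S v :=
  Finset.le_sup (f := fun T => (S.1 ∩ T.1).card) hT

theorem exists_binomRel_card_inter_lt {v : SVCol d r →₀ ℕ} {S T₁ T₂ : SVCol d r} {i j : Fin d}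
    (hT₁ : T₁ ∈ v.support) (hT₂ : T₂ ∈ v.support) (hiS : i ∈ S.1) (hi₁ : i ∉ T₁.1)
    (hi₂ : i ∈ T₂.1) (hj₁ : j ∈ T₁.1) (hj₂ : j ∉ T₂.1) (hjS : j ∉ S.1) :
    ∃ v', BinomRel (sfsfSpan K d r) v v' ∧
      ∃ R ∈ v'.support, (S.1 ∩ T₁.1).card < (S.1 ∩ R.1).card := by
  obtain ⟨v', hv', hR, -⟩ := exists_binomRel_exchange (K := K) hi₁ hi₂ hj₁ hj₂ hT₁ hT₂
  refine ⟨v', hv', _, hR, Finset.card_lt_card ((Finset.ssubset_iff_of_subset ?_).mpr ?_)⟩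
  · intro x hx
    obtain ⟨hxS, hx₁⟩ := Finset.mem_inter.mp hx
    exact Finset.mem_inter.mpr ⟨hxS, mem_exchange_of_mem hx₁ (ne_of_mem_of_not_mem hxS hjS)⟩
  · exact ⟨i, Finset.mem_inter.mpr ⟨hiS, mem_exchange_self⟩, fun h => hi₁ (Finset.mem_inter.mp h).2⟩

/-- One round of the exchange argument: if `T₁` has maximal overlap with `S`, pick `i ∈ S \ T₁`.
Either some `T₂ ∋ i` allows swapping `i` into `T₁` against some `j ∉ S`, or a preliminary
exchange between two other members of `v` first produces such a `T₂`. -/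
theorem exists_binomRel_maxOverlap_lt (hr : 0 < r) {u v : SVCol d r →₀ ℕ} {S : SVCol d r}
    (hS : S ∈ u.support) (h : toricDeg (SVconfig d r) u = toricDeg (SVconfig d r) v)
    (hSv : S ∉ v.support) :
    ∃ v', BinomRel (sfsfSpan K d r) v v' ∧ maxOverlap S v < maxOverlap S v' := by
  have hne : v.support.Nonempty := by
    obtain ⟨i, hi⟩ := Finset.card_pos.mp (S.2 ▸ hr)
    obtain ⟨T, hT, -⟩ := exists_mem_support_of_toricDeg_SV_eq h hS hi
    exact ⟨T, hT⟩
  obtain ⟨T₁, hT₁, hmax⟩ := Finset.exists_max_image v.support (fun T => (S.1 ∩ T.1).card) hne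
  have hT₁S : T₁ ≠ S := fun h => hSv (h ▸ hT₁)
  suffices ∃ v', BinomRel (sfsfSpan K d r) v v' ∧
      ∃ R ∈ v'.support, (S.1 ∩ T₁.1).card < (S.1 ∩ R.1).card by
    obtain ⟨v', hv', R, hR, hlt⟩ := this
    exact ⟨v', hv', (Finset.sup_le hmax).trans_lt (hlt.trans_le (card_inter_le_maxOverlap hR))⟩
  obtain ⟨i, hiS, hi₁⟩ := exists_mem_notMem_of_ne hT₁S.symm
  by_cases hA : ∃ T₂ ∈ v.support, i ∈ T₂.1 ∧ ∃ j ∈ T₁.1, j ∉ T₂.1 ∧ j ∉ S.1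
  · obtain ⟨T₂, hT₂, hi₂, j, hj₁, hj₂, hjS⟩ := hA
    exact exists_binomRel_card_inter_lt (K := K) hT₁ hT₂ hiS hi₁ hi₂ hj₁ hj₂ hjS
  push Not at hA
  obtain ⟨T₂, hT₂, hi₂⟩ := exists_mem_support_of_toricDeg_SV_eq h hS hiS
  obtain ⟨j, hj₁, hjS⟩ := exists_mem_notMem_of_ne hT₁S
  obtain ⟨T₄, hT₄, hj₄⟩ : ∃ T₄ ∈ v.support, j ∉ T₄.1 := by
    by_contra! hall
    exact hjS (forall_mem_of_toricDeg_SV_eq hr h hall S hS)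
  have hj₂ : j ∈ T₂.1 := by_contra fun hj₂ => hjS (hA T₂ hT₂ hi₂ j hj₁ hj₂)
  have hi₄ : i ∉ T₄.1 := fun hi₄ => hjS (hA T₄ hT₄ hi₄ j hj₁ hj₄)
  obtain ⟨k, hk₄, hk₂⟩ := exists_mem_notMem_of_ne (T := T₄) (T' := T₂) fun h => hi₄ (h ▸ hi₂)
  obtain ⟨v₁, hv₁, hT₂', hkeep⟩ := exists_binomRel_exchange (K := K) hk₂ hk₄ hj₂ hj₄ hT₂ hT₄
  have hT₁v₁ : T₁ ∈ v₁.support :=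
    hkeep T₁ hT₁ (fun h => hi₁ (h ▸ hi₂)) (fun h => hj₄ (h ▸ hj₁))
  obtain ⟨v₂, hv₂, hR⟩ := exists_binomRel_card_inter_lt (K := K) hT₁v₁ hT₂' hiS hi₁
    (mem_exchange_of_mem hi₂ (ne_of_mem_of_not_mem hiS hjS)) hj₁ notMem_exchange_self hjS
  exact ⟨v₂, hv₁.trans hv₂, hR⟩

theorem exists_binomRel_mem_support (hr : 0 < r) {u v : SVCol d r →₀ ℕ} {S : SVCol d r}
    (hS : S ∈ u.support) (h : toricDeg (SVconfig d r) u = toricDeg (SVconfig d r) v) :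
    ∃ v', BinomRel (sfsfSpan K d r) v v' ∧ S ∈ v'.support := by
  induction hn : r - maxOverlap S v using Nat.strong_induction_on generalizing v with
  | _ n ih =>
  by_cases hSv : S ∈ v.support
  · exact ⟨v, BinomRel.refl v, hSv⟩
  obtain ⟨v₁, hv₁, hlt⟩ := exists_binomRel_maxOverlap_lt (K := K) hr hS h hSv
  have := maxOverlap_le S v₁
  obtain ⟨v₂, hv₂, hS₂⟩ := ih _ (by omega) (h.trans (toricDeg_eq_of_binomRel hv₁)) rfl
  exact ⟨v₂, hv₁.trans hv₂, hS₂⟩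

theorem binomRel_of_toricDeg_eq (hr : 0 < r) {u v : SVCol d r →₀ ℕ}
    (h : toricDeg (SVconfig d r) u = toricDeg (SVconfig d r) v) :
    BinomRel (sfsfSpan K d r) u v := by
  induction hn : u.degree generalizing u v with
  | zero =>
    have hv : v.degree = 0 := (degree_eq_of_toricDeg_SV_eq hr h).symm.trans hn
    rw [(Finsupp.degree_eq_zero_iff u).mp hn, (Finsupp.degree_eq_zero_iff v).mp hv]
  | succ n ih =>
    have hu : u ≠ 0 := fun hu => by simp [hu] at hn
    obtain ⟨S, hS⟩ := Finsupp.support_nonempty_iff.mpr hu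
    obtain ⟨v', hv', hS'⟩ := exists_binomRel_mem_support (K := K) hr hS h
    obtain ⟨u₁, rfl⟩ := exists_eq_single_add hS
    obtain ⟨v₁, rfl⟩ := exists_eq_single_add hS'
    have h₁ : toricDeg (SVconfig d r) u₁ = toricDeg (SVconfig d r) v₁ := by
      simpa only [map_add, add_right_inj] using h.trans (toricDeg_eq_of_binomRel hv')
    rw [map_add, Finsupp.degree_single] at hn
    exact ((ih h₁ (by omega)).add_left (Finsupp.single S 1)).trans hv'.symm

end Moves

theorem squarefree_veronese_generated_by_sfsf_circuits_general (d r : ℕ) (h2 : 2 ≤ r)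
    (K : Type*) [Field K] :
    toricIdeal K (SVconfig d r) =
      Ideal.span (CircuitsSFSF K (toricIdeal K (SVconfig d r))) := by
  refine le_antisymm ((toricIdeal_le_span_binom _).trans (Ideal.span_le.mpr ?_))
    sfsfSpan_le_toricIdeal
  rintro _ ⟨u, v, h, rfl⟩
  exact binomRel_of_toricDeg_eq (by omega) h

/-- The toric ideal of the squarefree Veronese configuration is generated by the
circuits both of whose monomials are squarefree. -/
theorem squarefree_veronese_generated_by_sfsf_circuits (d r : ℕ) (h2 : 2 ≤ r)
    (hrd : r ≤ d) (K : Type*) [Field K] :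
    toricIdeal K (SVconfig d r) =
      Ideal.span (CircuitsSFSF K (toricIdeal K (SVconfig d r))) :=
  squarefree_veronese_generated_by_sfsf_circuits_general d r h2 K
end

section
/- Let G be a finite connected simple graph with the property that no induced subgraph of G consists of two odd cycles C_1, C_2 having no common vertex together with a path of length ≥ 2 connecting a vertex of C_1 and a vertex of C_2. Let C and C′ be odd cycles of G having no common vertex and let Γ be a path of G joining a vertex v of C to a vertex v′ of C′. Then at least one of the following holds: (a) there is an edge of G joining a vertex of C with a vertex of C′; (b) there is an edge {p,q} of G not belonging to Γ, joining a vertex p of C with a vertex q of Γ with q ≠ v; (c) there is an edge {p,q} of G not belonging to Γ, joining a vertex p of C′ with a vertex q of Γ with q ≠ v′. -/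
open MvPolynomial

/-- The monomial `t_i t_j` associated with an edge `{i, j}`. -/
noncomputable def edgeMonomial {V : Type*} (K : Type*) [Field K] (e : Sym2 V) :
    MvPolynomial V K :=
  Sym2.lift ⟨fun i j => MvPolynomial.X i * MvPolynomial.X j,
    fun _ _ => mul_comm _ _⟩ e

/-- The algebra map sending the variable of an edge `{i, j}` of `G` to `t_i t_j`. -/
noncomputable def graphMap {V : Type*} (K : Type*) [Field K] (G : SimpleGraph V) :
    MvPolynomial G.edgeSet K →ₐ[K] MvPolynomial V K :=
  MvPolynomial.aeval fun e => edgeMonomial K e.1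

/-- The toric ideal `I_{A_G}` of the graph `G`. -/
noncomputable def graphToricIdeal {V : Type*} (K : Type*) [Field K] (G : SimpleGraph V) :
    Ideal (MvPolynomial G.edgeSet K) :=
  RingHom.ker (graphMap K G).toRingHom

/-- `G` contains, as an induced subgraph, two vertex-disjoint odd cycles together with a
path of length at least `ℓ` joining a vertex of the first cycle to a vertex of the
second cycle (the path meeting the cycles only in its endpoints). -/
def HasTwoOddCyclesJoinedByPath {V : Type*} (G : SimpleGraph V) (ℓ : ℕ) : Prop :=
  ∃ (v₁ v₂ : V) (c₁ : G.Walk v₁ v₁) (c₂ : G.Walk v₂ v₂) (p : G.Walk v₁ v₂),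
    c₁.IsCycle ∧ c₂.IsCycle ∧ Odd c₁.length ∧ Odd c₂.length ∧
    p.IsPath ∧ ℓ ≤ p.length ∧
    (∀ x ∈ c₁.support, x ∉ c₂.support) ∧
    (∀ x ∈ p.support, x ∈ c₁.support → x = v₁) ∧
    (∀ x ∈ p.support, x ∈ c₂.support → x = v₂) ∧
    (∀ a b : V, G.Adj a b →
      (a ∈ c₁.support ∨ a ∈ c₂.support ∨ a ∈ p.support) →
      (b ∈ c₁.support ∨ b ∈ c₂.support ∨ b ∈ p.support) →
      (s(a, b) ∈ c₁.edges ∨ s(a, b) ∈ c₂.edges ∨ s(a, b) ∈ p.edges))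

/-!
Suppose that (a), (b) and (c) all fail. If `Γ` met `C` in a vertex `x ≠ v`, follow `Γ` from `x`
until an edge leaves `C` (it must, as `v' ∉ C`): at the start `u` of that edge, the two cycle
neighbours of `u` and the far end of the edge would be three neighbours of `u` along `Γ`. So `Γ`
meets `C` only in `v` and `C'` only in `v'`, and every edge among the vertices of `C`, `C'` and `Γ`
joins two vertices of one of them.

Inside `C`, choose a shortest odd cycle `K` and a walk `A` from `v` to its base, with `A` as short
as possible over all such choices (the tail). The tadpole `A ∪ K` is then induced: a chord
of `K` would cut off a shorter odd cycle, a chord or a repeated vertex of `A` would shorten `A`,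
and an edge from `K` to a vertex `y` of `A` would either give a shorter tail ending with that edge
or, if `y` is the last-but-one vertex of `A`, close up through `y` an odd cycle no longer than `K`
with a shorter tail. Doing the same inside `C'` and replacing `Γ` by an induced path between `v`
and `v'` (of length at least two, as `v` and `v'` are not adjacent), the two odd cycles joined by
the tails and this path form the excluded induced configuration.
-/

namespace SimpleGraph.Walk

variable {V : Type*} {G : SimpleGraph V}

lemma two_le_length_of_ne_of_notMem_edges {u v : V} {p : G.Walk u v} (huv : u ≠ v)
    (h : s(u, v) ∉ p.edges) : 2 ≤ p.length := by
  rcases p with _ | ⟨_, _ | ⟨_, _⟩⟩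
  · exact absurd rfl huv
  · simp at h
  · simp

protected lemma IsPath.append {u v w : V} {p : G.Walk u v} {q : G.Walk v w} (hp : p.IsPath)
    (hq : q.IsPath) (h : ∀ x ∈ p.support, x ∈ q.support → x = v) : (p.append q).IsPath := by
  have hq' := hq.support_nodup
  rw [← cons_tail_support q, List.nodup_cons] at hq'
  rw [isPath_def, support_append, List.nodup_append]
  refine ⟨hp.support_nodup, hq'.2, fun x hxp y hyq hxy => ?_⟩
  subst hxy
  exact hq'.1 (h x hxp (List.mem_of_mem_tail hyq) ▸ hyq)

lemma IsPath.ncard_neighborSet_toSubgraph_le_two {u v : V} {p : G.Walk u v} (hp : p.IsPath)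
    (x : V) : (p.toSubgraph.neighborSet x).ncard ≤ 2 := by
  by_cases hx : x ∈ p.support
  swap
  · have : p.toSubgraph.neighborSet x = ∅ :=
      Set.eq_empty_of_forall_notMem fun _ hy => hx (mem_support_of_adj_toSubgraph hy)
    simp [this]
  by_cases hnil : p.Nil
  · have : p.toSubgraph.neighborSet x = ∅ :=
      Set.eq_empty_of_forall_notMem fun _ hy => not_nil_of_adj_toSubgraph hy hnil
    simp [this]
  obtain ⟨i, rfl, hi⟩ := mem_support_iff_exists_getVert.mp hx
  rcases Nat.eq_zero_or_pos i with rfl | hi₀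
  · simp [hp.neighborSet_toSubgraph_startpoint hnil]
  rcases hi.lt_or_eq with hlt | rfl
  · rw [hp.ncard_neighborSet_toSubgraph_internal_eq_two hi₀.ne' hlt]
  · simp [hp.neighborSet_toSubgraph_endpoint hnil]

lemma IsCycle.neighborSet_toSubgraph_eq_of_subset {u v w x : V} {c : G.Walk u u}
    {p : G.Walk v w} (hc : c.IsCycle) (hp : p.IsPath) (hx : x ∈ c.support)
    (h : c.toSubgraph.neighborSet x ⊆ p.toSubgraph.neighborSet x) :
    c.toSubgraph.neighborSet x = p.toSubgraph.neighborSet x :=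
  Set.eq_of_subset_of_ncard_le h
    ((hp.ncard_neighborSet_toSubgraph_le_two x).trans
      (hc.ncard_neighborSet_toSubgraph_eq_two hx).ge)
    p.finite_neighborSet_toSubgraph

lemma IsPath.eq_of_mem_support_of_mem_cycle {v t x : V} {c : G.Walk v v} {p : G.Walk v t}
    (hp : p.IsPath) (hc : c.IsCycle) (ht : t ∉ c.support)
    (hcp : ∀ a b, G.Adj a b → a ∈ c.support → b ∈ p.support → b ≠ v → s(a, b) ∈ p.edges)
    (hxp : x ∈ p.support) (hxc : x ∈ c.support) : x = v := by
  classical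
  by_contra hxv
  obtain ⟨d, hd, hd₁, hd₂⟩ :=
    (p.dropUntil x hxp).exists_boundary_dart {z | z ∈ c.support} hxc ht
  have hd_drop : d.fst ∈ (p.dropUntil x hxp).support := dart_fst_mem_support_of_mem_darts _ hd
  have hd_ne : d.fst ≠ v := by
    rintro hdv
    by_cases hdx : d.fst = x
    · exact hxv (hdx ▸ hdv)
    · exact ((p.take_spec hxp ▸ hp).ne_of_mem_support_of_append hdx (start_mem_support _)
        hd_drop) hdv.symm
  have hsub : c.toSubgraph.neighborSet d.fst ⊆ p.toSubgraph.neighborSet d.fst := fun y hy => by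
    have hyc : s(y, d.fst) ∈ c.edges := Sym2.eq_swap ▸ adj_toSubgraph_iff_mem_edges.mp hy
    rw [Subgraph.mem_neighborSet, adj_toSubgraph_iff_mem_edges, Sym2.eq_swap]
    exact hcp y d.fst (c.adj_of_mem_edges hyc) (c.fst_mem_support_of_mem_edges hyc)
      (p.support_dropUntil_subset_support hxp hd_drop) hd_ne
  have hsnd : d.snd ∈ p.toSubgraph.neighborSet d.fst :=
    adj_toSubgraph_iff_mem_edges.mpr <| p.edges_dropUntil_subset_edges hxp <|
      List.mem_map_of_mem (f := Dart.edge) hd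
  rw [← hc.neighborSet_toSubgraph_eq_of_subset hp hd₁ hsub] at hsnd
  exact hd₂ (mem_support_of_adj_toSubgraph hsnd.symm)

lemma mem_support_takeUntil_or [DecidableEq V] {u v x y : V} {p : G.Walk u v}
    (hx : x ∈ p.support) (hy : y ∈ p.support) :
    x ∈ (p.takeUntil y hy).support ∨ y ∈ (p.takeUntil x hx).support := by
  rcases le_total (p.takeUntil x hx).length (p.takeUntil y hy).length with h | h
  · left
    rw [← getVert_length_takeUntil hx, ← getVert_takeUntil hy h]
    exact getVert_mem_support _ _
  · right
    rw [← getVert_length_takeUntil hy, ← getVert_takeUntil hx h]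
    exact getVert_mem_support _ _

lemma exists_length_lt_append_of_adj [DecidableEq V] {u v x y : V} {t : G.Walk u y}
    {d : G.Walk y v} (hxy : G.Adj x y) (hx : x ∈ t.support) (he : s(x, y) ∉ t.edges) :
    ∃ q : G.Walk u v, q.support ⊆ (t.append d).support ∧ q.length < (t.append d).length := by
  refine ⟨(t.takeUntil x hx).append (cons hxy d), fun z hz => ?_, ?_⟩
  · rw [mem_support_append_iff, support_cons, List.mem_cons] at hz
    rw [mem_support_append_iff]
    rcases hz with hz | rfl | hz
    · exact .inl (t.support_takeUntil_subset_support hx hz)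
    · exact .inl hx
    · exact .inr hz
  · have h₂ : 2 ≤ (t.dropUntil x hx).length := two_le_length_of_ne_of_notMem_edges hxy.ne
      fun h => he (t.edges_dropUntil_subset_edges hx h)
    have ht := congrArg length (t.take_spec hx)
    simp only [length_append, length_cons] at ht ⊢
    omega

lemma exists_length_lt_of_isChord {u v : V} {p : G.Walk u v} {e : Sym2 V} (h : p.IsChord e) :
    ∃ q : G.Walk u v, q.support ⊆ p.support ∧ q.length < p.length := by
  classical
  induction e using Sym2.ind with | _ x y => ?_
  obtain ⟨hxy, he, hx, hy⟩ := isChord_sym2Mk.mp h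
  rcases mem_support_takeUntil_or hx hy with h' | h'
  · rw [← p.take_spec hy]
    exact exists_length_lt_append_of_adj hxy h' fun h => he (p.edges_takeUntil_subset_edges hy h)
  · rw [← p.take_spec hx]
    exact exists_length_lt_append_of_adj hxy.symm h'
      fun h => he (Sym2.eq_swap ▸ p.edges_takeUntil_subset_edges hx h)

lemma exists_length_lt_of_not_isPath_isChordless {u v : V} {p : G.Walk u v}
    (h : ¬ (p.IsPath ∧ p.IsChordless)) :
    ∃ q : G.Walk u v, q.support ⊆ p.support ∧ q.length < p.length := by
  classical
  by_cases hp : p.IsPath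
  · obtain ⟨e, he⟩ : ∃ e, p.IsChord e := by simpa [IsChordless, hp] using h
    exact exists_length_lt_of_isChord he
  · refine ⟨p.bypass, p.support_bypass_subset_support,
      p.length_bypass_le_length.lt_of_ne fun hl => hp ?_⟩
    exact p.bypass_eq_self_of_length_le_length_bypass hl.ge ▸ p.bypass_isPath

theorem exists_isPath_isChordless {u v : V} (p : G.Walk u v) :
    ∃ q : G.Walk u v, q.IsPath ∧ q.IsChordless ∧ q.support ⊆ p.support := by
  induction h : p.length using Nat.strong_induction_on generalizing p with
  | _ n ih =>
    by_cases hp : p.IsPath ∧ p.IsChordless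
    · exact ⟨p, hp.1, hp.2, List.Subset.refl _⟩
    obtain ⟨q, hqs, hql⟩ := exists_length_lt_of_not_isPath_isChordless hp
    obtain ⟨r, hr, hrc, hrs⟩ := ih _ (h ▸ hql) q rfl
    exact ⟨r, hr, hrc, List.Subset.trans hrs hqs⟩

lemma IsCycle.exists_odd_length_lt_of_not_isChordless {u : V} {k : G.Walk u u}
    (hk : k.IsCycle) (hodd : Odd k.length) (h : ¬ k.IsChordless) :
    ∃ (w : V) (k' : G.Walk w w), k'.IsCycle ∧ Odd k'.length ∧ k'.support ⊆ k.support ∧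
      k'.length < k.length := by
  classical
  obtain ⟨e, he⟩ : ∃ e, k.IsChord e := by simpa [IsChordless] using h
  induction e using Sym2.ind with | _ x y => ?_
  obtain ⟨hxy, he, hx, hy⟩ := isChord_sym2Mk.mp he
  -- the chord `xy` cuts `k` into arcs `P : x → y` and `R : y → x`
  obtain ⟨P, R, hPR⟩ :=
    mem_support_iff_exists_append.mp ((mem_support_rotate_iff k x hx).mpr hy)
  have hc : (P.append R).IsCycle := hPR ▸ hk.rotate hx
  have hsupp : (P.append R).support ⊆ k.support := fun z hz =>
    (mem_support_rotate_iff k x hx).mp (hPR ▸ hz)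
  have hedges : ∀ e', e' ∈ P.edges ∨ e' ∈ R.edges → e' ∈ k.edges := fun e' h' =>
    (rotate_edges k x hx).mem_iff.mp (hPR ▸ by simpa [edges_append] using h')
  have hlen : P.length + R.length = k.length := by rw [← length_append, ← hPR, length_rotate]
  have hP : s(y, x) ∉ P.edges := fun h => he (hedges _ (.inl (Sym2.eq_swap ▸ h)))
  have hR : s(x, y) ∉ R.edges := fun h => he (hedges _ (.inr h))
  have hP₂ := two_le_length_of_ne_of_notMem_edges hxy.ne (Sym2.eq_swap ▸ hP)
  have hR₂ := two_le_length_of_ne_of_notMem_edges hxy.ne.symm (Sym2.eq_swap ▸ hR)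
  rcases Nat.even_or_odd P.length with hPe | hPo
  · refine ⟨y, cons hxy.symm P, (cons_isCycle_iff P hxy.symm).mpr
      ⟨hc.isPath_of_append_left (not_nil_of_ne hxy.ne.symm), hP⟩,
      by simpa [Nat.odd_add_one] using hPe, ?_, by simp; omega⟩
    rw [support_cons]
    exact List.cons_subset.mpr ⟨hy, fun z hz => hsupp (P.support_subset_support_append_left R hz)⟩
  · have hRe : Even R.length := by
      obtain ⟨m, hm⟩ := hodd
      obtain ⟨n, hn⟩ := hPo
      exact ⟨m - n, by omega⟩
    refine ⟨x, cons hxy R, (cons_isCycle_iff R hxy).mpr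
      ⟨hc.isPath_of_append_right (not_nil_of_ne hxy.ne), hR⟩,
      by simpa [Nat.odd_add_one] using hRe, ?_, by simp; omega⟩
    rw [support_cons]
    exact List.cons_subset.mpr
      ⟨hx, fun z hz => hsupp (P.support_subset_support_append_right R hz)⟩

lemma isCycle_cons_concat {w x y : V} {P : G.Walk w x} {R : G.Walk x w}
    (hc : (P.append R).IsCycle) (hxw : x ≠ w) (hy : y ∉ (P.append R).support)
    (hyw : G.Adj y w) (hxy : G.Adj x y) : (cons hyw (P.concat hxy)).IsCycle := by
  have hyP : y ∉ P.support := fun h => hy (P.support_subset_support_append_left R h)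
  refine (cons_isCycle_iff _ hyw).mpr ⟨(concat_isPath_iff hxy).mpr
    ⟨hc.isPath_of_append_left (not_nil_of_ne hxw), hyP⟩, fun h => ?_⟩
  rw [edges_concat, List.concat_eq_append, List.mem_append, List.mem_singleton] at h
  rcases h with h | h
  · exact hyP (P.fst_mem_support_of_mem_edges h)
  · rcases Sym2.eq_iff.mp h with ⟨rfl, _⟩ | ⟨_, rfl⟩
    · exact hyP (end_mem_support P)
    · exact hxw rfl

lemma IsCycle.exists_odd_isCycle_of_adj {w x y : V} {k : G.Walk w w} (hk : k.IsCycle)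
    (hodd : Odd k.length) (hx : x ∈ k.support) (hxw : x ≠ w) (hy : y ∉ k.support)
    (hyw : G.Adj y w) (hxy : G.Adj x y) :
    ∃ k' : G.Walk y y, k'.IsCycle ∧ Odd k'.length ∧ k'.length ≤ k.length ∧
      k'.support ⊆ y :: k.support := by
  -- close up through `y` whichever of the two arcs of `k` between `w` and `x` is odd
  obtain ⟨P, R, rfl⟩ := mem_support_iff_exists_append.mp hx
  wlog hP : Odd P.length generalizing P R
  · obtain ⟨k', hk', hodd', hle, hs⟩ := this R.reverse P.reverse
      (by simpa [reverse_append] using hk.reverse) (by simpa [add_comm] using hodd) (by simp)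
      (by simpa [mem_support_append_iff, or_comm] using hy)
      (by
        obtain ⟨m, hm⟩ := hodd
        obtain ⟨n, hn⟩ := Nat.not_odd_iff_even.mp hP
        exact ⟨m - n, by simp only [length_append, length_reverse] at hm ⊢; omega⟩)
    refine ⟨k', hk', hodd', by simpa [add_comm] using hle, fun z hz => ?_⟩
    simpa [mem_support_append_iff, or_comm] using hs hz
  have hR : 2 ≤ R.length := by
    have : 0 < R.length := not_nil_iff_lt_length.mp (not_nil_of_ne hxw)
    obtain ⟨m, hm⟩ := hodd
    obtain ⟨n, hn⟩ := hP
    simp only [length_append] at hm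
    omega
  refine ⟨_, isCycle_cons_concat hk hxw hy hyw hxy, by simpa [Nat.odd_add_one] using hP,
    by simp; omega, fun z hz => ?_⟩
  simp only [support_cons, support_concat, List.mem_cons, List.mem_append] at hz ⊢
  grind [support_subset_support_append_left]

structure IsShortestOddCycleIn (s : List V) {u : V} (k : G.Walk u u) : Prop where
  isCycle : k.IsCycle
  odd : Odd k.length
  support_subset : k.support ⊆ s
  length_le : ∀ ⦃w : V⦄ (k' : G.Walk w w), k'.IsCycle → Odd k'.length → k'.support ⊆ s →
    k.length ≤ k'.length

namespace IsShortestOddCycleIn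

variable {s : List V} {u : V} {k : G.Walk u u}

lemma of_length_le {w : V} {k' : G.Walk w w} (hk : k.IsShortestOddCycleIn s)
    (hk' : k'.IsCycle) (hodd : Odd k'.length) (hs : k'.support ⊆ s)
    (hle : k'.length ≤ k.length) : k'.IsShortestOddCycleIn s :=
  ⟨hk', hodd, hs, fun _ k'' h₁ h₂ h₃ => hle.trans (hk.length_le k'' h₁ h₂ h₃)⟩

lemma rotate [DecidableEq V] {x : V} (hk : k.IsShortestOddCycleIn s) (hx : x ∈ k.support) :
    (k.rotate x hx).IsShortestOddCycleIn s :=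
  hk.of_length_le (hk.isCycle.rotate hx) (by simpa using hk.odd)
    (fun _ hz => hk.support_subset ((mem_support_rotate_iff k x hx).mp hz)) (by simp)

lemma isChordless (hk : k.IsShortestOddCycleIn s) : k.IsChordless := by
  by_contra h
  obtain ⟨_, k', hk', hodd, hsub, hlt⟩ :=
    hk.isCycle.exists_odd_length_lt_of_not_isChordless hk.odd h
  exact (hk.length_le k' hk' hodd (List.Subset.trans hsub hk.support_subset)).not_gt hlt

end IsShortestOddCycleIn

lemma IsCycle.exists_isShortestOddCycleIn {s : List V} {v : V} {c : G.Walk v v}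
    (hc : c.IsCycle) (hodd : Odd c.length) (hs : c.support ⊆ s) :
    ∃ (u : V) (k : G.Walk u u), k.IsShortestOddCycleIn s := by
  classical
  have hex : ∃ n, ∃ (u : V) (k : G.Walk u u),
      k.IsCycle ∧ Odd k.length ∧ k.support ⊆ s ∧ k.length = n :=
    ⟨_, v, c, hc, hodd, hs, rfl⟩
  obtain ⟨u, k, hk, hodd', hs', hlen⟩ := Nat.find_spec hex
  exact ⟨u, k, hk, hodd', hs', fun w k' h₁ h₂ h₃ =>
    hlen ▸ Nat.find_min' hex ⟨w, k', h₁, h₂, h₃, rfl⟩⟩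

structure IsOddTadpole {v w : V} (a : G.Walk v w) (k : G.Walk w w) : Prop where
  isPath : a.IsPath
  isCycle : k.IsCycle
  odd : Odd k.length
  eq_of_mem_support : ∀ z ∈ a.support, z ∈ k.support → z = w

structure IsShortestTailIn (s : List V) {v w : V} (a : G.Walk v w) (k : G.Walk w w) : Prop where
  isShortestOddCycleIn : k.IsShortestOddCycleIn s
  support_subset : a.support ⊆ s
  length_le : ∀ ⦃w' : V⦄ (a' : G.Walk v w') (k' : G.Walk w' w'), k'.IsShortestOddCycleIn s →
    a'.support ⊆ s → a.length ≤ a'.length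

lemma IsCycle.exists_isShortestTailIn {v : V} {c : G.Walk v v} (hc : c.IsCycle)
    (hodd : Odd c.length) :
    ∃ (w : V) (a : G.Walk v w) (k : G.Walk w w), a.IsShortestTailIn c.support k := by
  classical
  obtain ⟨u, k, hk⟩ := hc.exists_isShortestOddCycleIn hodd (List.Subset.refl _)
  have hex : ∃ n, ∃ (w : V) (a : G.Walk v w) (k : G.Walk w w),
      k.IsShortestOddCycleIn c.support ∧ a.support ⊆ c.support ∧ a.length = n :=
    ⟨_, u, c.takeUntil u (hk.support_subset (start_mem_support k)), k, hk,
      c.support_takeUntil_subset_support _, rfl⟩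
  obtain ⟨w, a, k, hk, hs, hlen⟩ := Nat.find_spec hex
  exact ⟨w, a, k, hk, hs, fun w' a' k' h₁ h₂ =>
    hlen ▸ Nat.find_min' hex ⟨w', a', k', h₁, h₂, rfl⟩⟩

namespace IsShortestTailIn

variable {s : List V} {v w : V} {a : G.Walk v w} {k : G.Walk w w}

lemma isPath_isChordless (h : a.IsShortestTailIn s k) : a.IsPath ∧ a.IsChordless := by
  by_contra h'
  obtain ⟨a', hs, hlt⟩ := exists_length_lt_of_not_isPath_isChordless h'
  exact (h.length_le a' k h.isShortestOddCycleIn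
    (List.Subset.trans hs h.support_subset)).not_gt hlt

lemma eq_of_mem_support {z : V} (h : a.IsShortestTailIn s k) (hza : z ∈ a.support)
    (hzk : z ∈ k.support) : z = w := by
  classical
  by_contra hzw
  have := h.length_le (a.takeUntil z hza) _ (h.isShortestOddCycleIn.rotate hzk)
    (List.Subset.trans (a.support_takeUntil_subset_support hza) h.support_subset)
  exact this.not_gt (length_takeUntil_lt_length hza hzw)

lemma not_adj {x y : V} (h : a.IsShortestTailIn s k) (hxk : x ∈ k.support)
    (hxa : x ∉ a.support) (hya : y ∈ a.support) (hyk : y ∉ k.support) : ¬ G.Adj x y := by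
  classical
  intro hxy
  have hk := h.isShortestOddCycleIn
  obtain ⟨t, d, rfl⟩ := mem_support_iff_exists_append.mp hya
  have hts : t.support ⊆ s :=
    List.Subset.trans (t.support_subset_support_append_left d) h.support_subset
  have hd : 0 < d.length := not_nil_iff_lt_length.mp
    (not_nil_of_ne fun hyw => hyk (by rw [hyw]; exact start_mem_support k))
  rcases Nat.lt_or_ge 1 d.length with hd₂ | hd₁
  · -- `t` followed by the edge `yx` is a shorter tail
    have := h.length_le (t.concat hxy.symm) _ (hk.rotate hxk) fun z hz => by
      rw [support_concat, List.mem_append, List.mem_singleton] at hz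
      exact hz.elim (fun hz => hts hz) fun hz => hz ▸ hk.support_subset hxk
    simp only [length_append, length_concat] at this
    omega
  · -- `y` is adjacent to `w`, and `t` is a shorter tail for an odd cycle through `y`
    obtain ⟨k', hk', hodd', hle, hs'⟩ := hk.isCycle.exists_odd_isCycle_of_adj hk.odd hxk
      (fun hxw => hxa (by rw [hxw]; exact end_mem_support _)) hyk
      (adj_of_length_eq_one (p := d) (by omega)) hxy
    have hs'' : k'.support ⊆ s := fun z hz =>
      (List.mem_cons.mp (hs' hz)).elim (fun hz => hz ▸ hts (end_mem_support t))
        fun hz => hk.support_subset hz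
    have := h.length_le t k' (hk.of_length_le hk' hodd' hs'' hle) hts
    simp only [length_append] at this
    omega

lemma isChordless_append (h : a.IsShortestTailIn s k) : (a.append k).IsChordless := by
  have ha := h.isPath_isChordless.2
  have hk := h.isShortestOddCycleIn.isChordless
  have cross : ∀ x y, x ∈ k.support → y ∈ a.support → G.Adj x y →
      s(x, y) ∈ a.edges ∨ s(x, y) ∈ k.edges := by
    intro x y hx hy hxy
    by_cases hxa : x ∈ a.support
    · exact .inl (ha.mem_edges hxa hy hxy)
    by_cases hyk : y ∈ k.support
    · exact .inr (hk.mem_edges hx hyk hxy)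
    exact absurd hxy (h.not_adj hx hxa hy hyk)
  rw [isChordless_iff_forall_mem_edges]
  intro x y hx hy hxy
  rw [mem_support_append_iff] at hx hy
  rw [edges_append, List.mem_append]
  rcases hx with hx | hx <;> rcases hy with hy | hy
  · exact .inl (ha.mem_edges hx hy hxy)
  · rw [Sym2.eq_swap]
    exact cross y x hy hx hxy.symm
  · exact cross x y hx hy hxy
  · exact .inr (hk.mem_edges hx hy hxy)

lemma isOddTadpole (h : a.IsShortestTailIn s k) : a.IsOddTadpole k :=
  ⟨h.isPath_isChordless.1, h.isShortestOddCycleIn.isCycle, h.isShortestOddCycleIn.odd,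
    fun _ hza hzk => h.eq_of_mem_support hza hzk⟩

lemma support_append_subset (h : a.IsShortestTailIn s k) : (a.append k).support ⊆ s := by
  intro z hz
  rw [mem_support_append_iff] at hz
  exact hz.elim (fun hz => h.support_subset hz) fun hz => h.isShortestOddCycleIn.support_subset hz

end IsShortestTailIn

end SimpleGraph.Walk

open SimpleGraph Walk

section

variable {V : Type*} {G : SimpleGraph V}

theorem hasTwoOddCyclesJoinedByPath_of_isOddTadpole {v v' w₁ w₂ : V} {a₁ : G.Walk v w₁} {k₁ : G.Walk w₁ w₁} {a₂ : G.Walk v' w₂}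
    {k₂ : G.Walk w₂ w₂} {q : G.Walk v v'} (h₁ : a₁.IsOddTadpole k₁) (h₂ : a₂.IsOddTadpole k₂)
    (hq : q.IsPath) (hq₂ : 2 ≤ q.length)
    (h₁₂ : ∀ z ∈ (a₁.append k₁).support, z ∉ (a₂.append k₂).support)
    (h₁q : ∀ z ∈ q.support, z ∈ (a₁.append k₁).support → z = v)
    (h₂q : ∀ z ∈ q.support, z ∈ (a₂.append k₂).support → z = v')
    (hind : ∀ x y, G.Adj x y →
      (x ∈ (a₁.append k₁).support ∨ x ∈ (a₂.append k₂).support ∨ x ∈ q.support) →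
      (y ∈ (a₁.append k₁).support ∨ y ∈ (a₂.append k₂).support ∨ y ∈ q.support) →
      s(x, y) ∈ (a₁.append k₁).edges ∨ s(x, y) ∈ (a₂.append k₂).edges ∨ s(x, y) ∈ q.edges) :
    HasTwoOddCyclesJoinedByPath G 2 := by
  simp only [mem_support_append_iff] at h₁₂ h₁q h₂q hind
  simp only [edges_append, List.mem_append] at hind
  refine ⟨w₁, w₂, k₁, k₂, a₁.reverse.append (q.append a₂), h₁.isCycle, h₂.isCycle, h₁.odd,
    h₂.odd, ?_, by simp; omega, fun z hz₁ hz₂ => h₁₂ z (.inr hz₁) (.inr hz₂), ?_, ?_, ?_⟩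
  · refine h₁.isPath.reverse.append (hq.append h₂.isPath fun z hz hz' => h₂q z hz (.inl hz'))
      fun z hz hz' => ?_
    rw [support_reverse, List.mem_reverse] at hz
    rw [mem_support_append_iff] at hz'
    exact hz'.elim (fun hz' => h₁q z hz' (.inl hz)) fun hz' => absurd (.inl hz') (h₁₂ z (.inl hz))
  · intro z hz hzk
    simp only [mem_support_append_iff, support_reverse, List.mem_reverse] at hz
    refine h₁.eq_of_mem_support z ?_ hzk
    rcases hz with hz | hz | hz
    · exact hz
    · exact h₁q z hz (.inr hzk) ▸ start_mem_support a₁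
    · exact absurd (.inl hz) (h₁₂ z (.inr hzk))
  · intro z hz hzk
    simp only [mem_support_append_iff, support_reverse, List.mem_reverse] at hz
    refine h₂.eq_of_mem_support z ?_ hzk
    rcases hz with hz | hz | hz
    · exact absurd (.inr hzk) (h₁₂ z (.inl hz))
    · exact h₂q z hz (.inr hzk) ▸ start_mem_support a₂
    · exact hz
  · intro x y hxy hx hy
    simp only [mem_support_append_iff, support_reverse, List.mem_reverse] at hx hy
    simp only [edges_append, edges_reverse, List.mem_append, List.mem_reverse]
    rcases hind x y hxy (by tauto) (by tauto) with (h | h) | (h | h) | h <;> simp [h]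

lemma mem_support_or_mem_support_of_adj {u v w a b : V}
    {c : G.Walk u u} {p : G.Walk v w}
    (hcp : ∀ a b, G.Adj a b → a ∈ c.support → b ∈ p.support → b ≠ u → s(a, b) ∈ p.edges)
    (hab : G.Adj a b) (ha : a ∈ c.support) (hb : b ∈ p.support) :
    b ∈ c.support ∨ a ∈ p.support := by
  by_cases hbu : b = u
  · exact .inl (hbu ▸ start_mem_support c)
  · exact .inr (p.fst_mem_support_of_mem_edges (hcp a b hab ha hb hbu))

lemma mem_same_support_of_adj {v v' : V}
    {c : G.Walk v v} {c' : G.Walk v' v'} {p : G.Walk v v'}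
    (hcc' : ∀ a b, G.Adj a b → a ∈ c.support → b ∉ c'.support)
    (hcp : ∀ a b, G.Adj a b → a ∈ c.support → b ∈ p.support → b ≠ v → s(a, b) ∈ p.edges)
    (hc'p : ∀ a b, G.Adj a b → a ∈ c'.support → b ∈ p.support → b ≠ v' → s(a, b) ∈ p.edges)
    {a b : V} (hab : G.Adj a b) (ha : a ∈ c.support ∨ a ∈ c'.support ∨ a ∈ p.support)
    (hb : b ∈ c.support ∨ b ∈ c'.support ∨ b ∈ p.support) :
    (a ∈ c.support ∧ b ∈ c.support) ∨ (a ∈ c'.support ∧ b ∈ c'.support) ∨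
      (a ∈ p.support ∧ b ∈ p.support) := by
  rcases ha with ha | ha | ha <;> rcases hb with hb | hb | hb
  · exact .inl ⟨ha, hb⟩
  · exact absurd hb (hcc' a b hab ha)
  · rcases mem_support_or_mem_support_of_adj hcp hab ha hb with h | h
    exacts [.inl ⟨ha, h⟩, .inr (.inr ⟨h, hb⟩)]
  · exact absurd ha (hcc' b a hab.symm hb)
  · exact .inr (.inl ⟨ha, hb⟩)
  · rcases mem_support_or_mem_support_of_adj hc'p hab ha hb with h | h
    exacts [.inr (.inl ⟨ha, h⟩), .inr (.inr ⟨h, hb⟩)]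
  · rcases mem_support_or_mem_support_of_adj hcp hab.symm hb ha with h | h
    exacts [.inl ⟨h, hb⟩, .inr (.inr ⟨ha, h⟩)]
  · rcases mem_support_or_mem_support_of_adj hc'p hab.symm hb ha with h | h
    exacts [.inr (.inl ⟨h, hb⟩), .inr (.inr ⟨ha, h⟩)]
  · exact .inr (.inr ⟨ha, hb⟩)

theorem hasTwoOddCyclesJoinedByPath_of_forall_adj {v v' : V}
    {c : G.Walk v v} {c' : G.Walk v' v'} {p : G.Walk v v'}
    (hc : c.IsCycle) (hc' : c'.IsCycle) (hodd : Odd c.length) (hodd' : Odd c'.length)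
    (hdisj : ∀ x ∈ c.support, x ∉ c'.support) (hvv' : ¬ G.Adj v v')
    (hpc : ∀ x ∈ p.support, x ∈ c.support → x = v)
    (hpc' : ∀ x ∈ p.support, x ∈ c'.support → x = v')
    (hlocal : ∀ a b, G.Adj a b →
      (a ∈ c.support ∨ a ∈ c'.support ∨ a ∈ p.support) →
      (b ∈ c.support ∨ b ∈ c'.support ∨ b ∈ p.support) →
      (a ∈ c.support ∧ b ∈ c.support) ∨ (a ∈ c'.support ∧ b ∈ c'.support) ∨
        (a ∈ p.support ∧ b ∈ p.support)) :
    HasTwoOddCyclesJoinedByPath G 2 := by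
  obtain ⟨w₁, a₁, k₁, h₁⟩ := hc.exists_isShortestTailIn hodd
  obtain ⟨w₂, a₂, k₂, h₂⟩ := hc'.exists_isShortestTailIn hodd'
  obtain ⟨q, hq, hqc, hqs⟩ := p.exists_isPath_isChordless
  have hT₁ := h₁.support_append_subset
  have hT₂ := h₂.support_append_subset
  refine hasTwoOddCyclesJoinedByPath_of_isOddTadpole h₁.isOddTadpole h₂.isOddTadpole hq
    (two_le_length_of_ne_of_notMem_edges
      (fun h => hdisj v (start_mem_support c) (h ▸ start_mem_support c'))
      fun h => hvv' (q.adj_of_mem_edges h))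
    (fun z hz hz' => hdisj z (hT₁ hz) (hT₂ hz')) (fun z hz hz' => hpc z (hqs hz) (hT₁ hz'))
    (fun z hz hz' => hpc' z (hqs hz) (hT₂ hz')) fun x y hxy hx hy => ?_
  have piece : ∀ z, (z ∈ (a₁.append k₁).support ∨ z ∈ (a₂.append k₂).support ∨ z ∈ q.support) →
      (z ∈ c.support → z ∈ (a₁.append k₁).support) ∧
      (z ∈ c'.support → z ∈ (a₂.append k₂).support) ∧ (z ∈ p.support → z ∈ q.support) := by
    rintro z (hz | hz | hz)
    · refine ⟨fun _ => hz, fun hz' => absurd hz' (hdisj z (hT₁ hz)), fun hz' => ?_⟩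
      rw [hpc z hz' (hT₁ hz)]
      exact start_mem_support q
    · refine ⟨fun hz' => absurd (hT₂ hz) (hdisj z hz'), fun _ => hz, fun hz' => ?_⟩
      rw [hpc' z hz' (hT₂ hz)]
      exact end_mem_support q
    · refine ⟨fun hz' => ?_, fun hz' => ?_, fun _ => hz⟩
      · rw [hpc z (hqs hz) hz']
        exact start_mem_support _
      · rw [hpc' z (hqs hz) hz']
        exact start_mem_support _
  have cover : ∀ z, (z ∈ (a₁.append k₁).support ∨ z ∈ (a₂.append k₂).support ∨ z ∈ q.support) →
      z ∈ c.support ∨ z ∈ c'.support ∨ z ∈ p.support := by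
    rintro z (hz | hz | hz)
    exacts [.inl (hT₁ hz), .inr (.inl (hT₂ hz)), .inr (.inr (hqs hz))]
  rcases hlocal x y hxy (cover x hx) (cover y hy) with ⟨hxs, hys⟩ | ⟨hxs, hys⟩ | ⟨hxs, hys⟩
  · exact .inl (h₁.isChordless_append.mem_edges ((piece x hx).1 hxs) ((piece y hy).1 hys) hxy)
  · exact .inr (.inl
      (h₂.isChordless_append.mem_edges ((piece x hx).2.1 hxs) ((piece y hy).2.1 hys) hxy))
  · exact .inr (.inr (hqc.mem_edges ((piece x hx).2.2 hxs) ((piece y hy).2.2 hys) hxy))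

end

theorem key_lemma_odd_cycles_path_general {V : Type*} (G : SimpleGraph V)
    (hno : ¬ HasTwoOddCyclesJoinedByPath G 2)
    (v v' : V) (c : G.Walk v v) (c' : G.Walk v' v') (p : G.Walk v v')
    (hc : c.IsCycle) (hc' : c'.IsCycle) (hodd : Odd c.length) (hodd' : Odd c'.length)
    (hdisj : ∀ x ∈ c.support, x ∉ c'.support) (hp : p.IsPath) :
    (∃ a b, G.Adj a b ∧ a ∈ c.support ∧ b ∈ c'.support) ∨
      (∃ a b, G.Adj a b ∧ a ∈ c.support ∧ b ∈ p.support ∧ b ≠ v ∧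
        s(a, b) ∉ p.edges) ∨
      (∃ a b, G.Adj a b ∧ a ∈ c'.support ∧ b ∈ p.support ∧ b ≠ v' ∧
        s(a, b) ∉ p.edges) := by
  by_contra! h
  obtain ⟨hcc', hcp, hc'p⟩ := h
  have hpc : ∀ x ∈ p.support, x ∈ c.support → x = v := fun x hx hxc =>
    hp.eq_of_mem_support_of_mem_cycle hc (fun h => hdisj v' h (start_mem_support c')) hcp hx hxc
  have hpc' : ∀ x ∈ p.support, x ∈ c'.support → x = v' := fun x hx hxc =>
    hp.reverse.eq_of_mem_support_of_mem_cycle hc' (hdisj v (start_mem_support c))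
      (by simpa using hc'p) (by simpa using hx) hxc
  exact hno (hasTwoOddCyclesJoinedByPath_of_forall_adj hc hc' hodd hodd' hdisj
    (fun h => hcc' v v' h (start_mem_support c) (start_mem_support c')) hpc hpc'
    fun _ _ hab => mem_same_support_of_adj hcc' hcp hc'p hab)

/-- Key lemma: in a connected graph with no induced "two disjoint odd cycles joined by a
path of length ≥ 2" subgraph, given two vertex-disjoint odd cycles joined by a path,
one of the configurations (a), (b), (c) occurs. -/
theorem key_lemma_odd_cycles_path {V : Type*} [Fintype V] (G : SimpleGraph V)
    (hconn : G.Connected) (hno : ¬ HasTwoOddCyclesJoinedByPath G 2)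
    (v v' : V) (c : G.Walk v v) (c' : G.Walk v' v') (p : G.Walk v v')
    (hc : c.IsCycle) (hc' : c'.IsCycle) (hodd : Odd c.length) (hodd' : Odd c'.length)
    (hdisj : ∀ x ∈ c.support, x ∉ c'.support) (hp : p.IsPath) :
    (∃ a b, G.Adj a b ∧ a ∈ c.support ∧ b ∈ c'.support) ∨
      (∃ a b, G.Adj a b ∧ a ∈ c.support ∧ b ∈ p.support ∧ b ≠ v ∧
        s(a, b) ∉ p.edges) ∨
      (∃ a b, G.Adj a b ∧ a ∈ c'.support ∧ b ∈ p.support ∧ b ≠ v' ∧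
        s(a, b) ∉ p.edges) :=
  key_lemma_odd_cycles_path_general G hno v v' c c' p hc hc' hodd hodd' hdisj hp
end

section
/- Let A ∈ ℤ^{d×n} be a configuration over a field K and suppose the toric ideal I_A is generated by two binomials f_1 = X^{u⁺} − X^{u⁻} and f_2 = X^{v⁺} − X^{v⁻} (u, v ∈ ker_ℤ A, u ≠ ±v) such that all four monomials X^{u⁺}, X^{u⁻}, X^{v⁺}, X^{v⁻} are squarefree. Then it cannot happen that both supp(X^{u⁺}) ∩ supp(X^{v⁻}) ≠ ∅ and supp(X^{u⁻}) ∩ supp(X^{v⁺}) ≠ ∅; indeed, if both intersections were nonempty, the binomial X^{w⁺} − X^{w⁻} with w = u + v would belong to I_A but would not lie in the ideal generated by f_1 and f_2. -/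
open MvPolynomial

/-- The positive part `u⁺` of an integer vector, as an exponent vector. -/
noncomputable def intPos {n : ℕ} (u : Fin n → ℤ) : Fin n →₀ ℕ :=
  Finsupp.equivFunOnFinite.symm fun j => (u j).toNat

/-- The negative part `u⁻` of an integer vector, as an exponent vector. -/
noncomputable def intNeg {n : ℕ} (u : Fin n → ℤ) : Fin n →₀ ℕ :=
  Finsupp.equivFunOnFinite.symm fun j => (-u j).toNat

lemma intPos_apply {n : ℕ} (u : Fin n → ℤ) (j : Fin n) : intPos u j = (u j).toNat := rfl

lemma intNeg_apply {n : ℕ} (u : Fin n → ℤ) (j : Fin n) : intNeg u j = (-u j).toNat := rfl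

lemma toricMap_monomial_s17 {d n : ℕ} (K : Type*) [Field K] (A : Matrix (Fin d) (Fin n) ℤ)
    (m : Fin n →₀ ℕ) :
    toricMap K A (MvPolynomial.monomial m 1) =
      AddMonoidAlgebra.single (fun i => ∑ j, (m j : ℤ) * A i j) 1 := by
  simp only [toricMap, MvPolynomial.aeval_monomial, map_one, one_mul]
  rw [Finsupp.prod]
  simp only [AddMonoidAlgebra.single_pow, one_pow]
  rw [AddMonoidAlgebra.prod_single, Finset.prod_const_one]
  congr 1
  funext i
  rw [Finset.sum_apply]
  rw [Finset.sum_subset (Finset.subset_univ m.support)]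
  · exact Finset.sum_congr rfl fun j _ => by
      simp [nsmul_eq_mul, mul_comm]
  · intro j _ hj
    simp [Finsupp.notMem_support_iff.mp hj]

lemma binom_mem_toricIdeal {d n : ℕ} (K : Type*) [Field K]
    (A : Matrix (Fin d) (Fin n) ℤ) (w : Fin n → ℤ) (hw : A.mulVec w = 0) :
    binom K (intPos w) (intNeg w) ∈ toricIdeal K A := by
  rw [toricIdeal, RingHom.mem_ker]
  show toricMap K A (binom K (intPos w) (intNeg w)) = 0
  rw [binom, map_sub, toricMap_monomial_s17, toricMap_monomial_s17]
  rw [sub_eq_zero]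
  congr 1
  funext i
  have h0 : ∑ j, w j * A i j = 0 := by
    have := congrFun hw i
    simpa [Matrix.mulVec, dotProduct, mul_comm] using this
  have : ∀ j, ((intPos w j : ℤ)) * A i j - ((intNeg w j : ℤ)) * A i j = w j * A i j := by
    intro j
    rw [intPos_apply, intNeg_apply, ← sub_mul]
    congr 1
    omega
  have hsum : (∑ j, (intPos w j : ℤ) * A i j) - (∑ j, (intNeg w j : ℤ) * A i j)
      = ∑ j, w j * A i j := by
    rw [← Finset.sum_sub_distrib]
    exact Finset.sum_congr rfl fun j _ => this j
  have := hsum.trans h0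
  linarith

lemma aeval_monomial_zero {σ : Type*} [DecidableEq σ] (K : Type*) [Field K]
    (g : σ → MvPolynomial σ K) (m : σ →₀ ℕ) (j : σ)
    (hj : m j ≠ 0) (hg : g j = 0) :
    MvPolynomial.aeval g (MvPolynomial.monomial m (1 : K)) = 0 := by
  rw [MvPolynomial.aeval_monomial, Finsupp.prod,
    Finset.prod_eq_zero (Finsupp.mem_support_iff.2 hj) (by rw [hg, zero_pow hj])]
  simp

lemma aeval_monomial_id {σ : Type*} (K : Type*) [Field K]
    (g : σ → MvPolynomial σ K) (m : σ →₀ ℕ)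
    (h : ∀ j ∈ m.support, g j = MvPolynomial.X j) :
    MvPolynomial.aeval g (MvPolynomial.monomial m (1 : K)) =
      MvPolynomial.monomial m 1 := by
  rw [MvPolynomial.aeval_monomial, map_one, one_mul, MvPolynomial.monomial_eq,
    map_one, one_mul]
  exact Finsupp.prod_congr fun j hj => by rw [h j hj]

lemma binom_ne_zero {σ K : Type*} [Field K] {a b : σ →₀ ℕ} (h : a ≠ b) :
    binom K a b ≠ 0 := by
  rw [binom, sub_ne_zero]
  intro hc
  exact h (MvPolynomial.monomial_left_injective (one_ne_zero (α := K)) hc)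

/-- If the toric ideal of a configuration is generated by two squarefree binomials
`f₁ = X^{u⁺} - X^{u⁻}` and `f₂ = X^{v⁺} - X^{v⁻}` with `u ≠ ±v`, then it cannot happen
that both `supp(X^{u⁺}) ∩ supp(X^{v⁻})` and `supp(X^{u⁻}) ∩ supp(X^{v⁺})` are nonempty;
indeed, otherwise the binomial of `w = u + v` would be in `I_A` but not in `⟨f₁, f₂⟩`. -/
theorem two_squarefree_binomial_generators_supports {d n : ℕ}
    (A : Matrix (Fin d) (Fin n) ℤ) (hA : IsConfiguration A)
    (K : Type*) [Field K] (u v : Fin n → ℤ)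
    (hu : A.mulVec u = 0) (hv : A.mulVec v = 0)
    (huv : u ≠ v) (huv' : u ≠ -v)
    (hsf₁ : SqfreeExp (intPos u)) (hsf₂ : SqfreeExp (intNeg u))
    (hsf₃ : SqfreeExp (intPos v)) (hsf₄ : SqfreeExp (intNeg v))
    (hgen : toricIdeal K A = Ideal.span
      {binom K (intPos u) (intNeg u), binom K (intPos v) (intNeg v)}) :
    ¬ ((∃ j, 0 < u j ∧ v j < 0) ∧ (∃ j, u j < 0 ∧ 0 < v j)) ∧
      ((∃ j, 0 < u j ∧ v j < 0) → (∃ j, u j < 0 ∧ 0 < v j) →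
        binom K (intPos (u + v)) (intNeg (u + v)) ∈ toricIdeal K A ∧
        binom K (intPos (u + v)) (intNeg (u + v)) ∉ Ideal.span
          {binom K (intPos u) (intNeg u), binom K (intPos v) (intNeg v)}) := by
  have key : (∃ j, 0 < u j ∧ v j < 0) → (∃ j, u j < 0 ∧ 0 < v j) →
      binom K (intPos (u + v)) (intNeg (u + v)) ∈ toricIdeal K A ∧
      binom K (intPos (u + v)) (intNeg (u + v)) ∉ Ideal.span
        {binom K (intPos u) (intNeg u), binom K (intPos v) (intNeg v)} := by
    rintro ⟨j₁, hj₁u, hj₁v⟩ ⟨j₂, hj₂u, hj₂v⟩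
    -- squarefreeness pins down the values at j₁, j₂
    have hu1 : u j₁ = 1 := by have := hsf₁ j₁; rw [intPos_apply] at this; omega
    have hv1 : v j₁ = -1 := by have := hsf₄ j₁; rw [intNeg_apply] at this; omega
    have hu2 : u j₂ = -1 := by have := hsf₂ j₂; rw [intNeg_apply] at this; omega
    have hv2 : v j₂ = 1 := by have := hsf₃ j₂; rw [intPos_apply] at this; omega
    have hw : A.mulVec (u + v) = 0 := by
      rw [Matrix.mulVec_add, hu, hv, add_zero]
    refine ⟨binom_mem_toricIdeal K A (u + v) hw, ?_⟩
    -- the killing substitution x_{j₁} = x_{j₂} = 0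
    classical
    set g : Fin n → MvPolynomial (Fin n) K :=
      fun j => if j = j₁ ∨ j = j₂ then 0 else MvPolynomial.X j with hg
    have hgj₁ : g j₁ = 0 := by simp [hg]
    have hgj₂ : g j₂ = 0 := by simp [hg]
    have hφf₁ : MvPolynomial.aeval g (binom K (intPos u) (intNeg u)) = 0 := by
      rw [binom, map_sub,
        aeval_monomial_zero K g _ j₁ (by rw [intPos_apply]; omega) hgj₁,
        aeval_monomial_zero K g _ j₂ (by rw [intNeg_apply]; omega) hgj₂, sub_zero]
    have hφf₂ : MvPolynomial.aeval g (binom K (intPos v) (intNeg v)) = 0 := by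
      rw [binom, map_sub,
        aeval_monomial_zero K g _ j₂ (by rw [intPos_apply]; omega) hgj₂,
        aeval_monomial_zero K g _ j₁ (by rw [intNeg_apply]; omega) hgj₁, sub_zero]
    have hwj : ∀ j, (u + v) j ≠ 0 → j ≠ j₁ ∧ j ≠ j₂ := by
      intro j hj
      constructor <;> rintro rfl <;> simp [Pi.add_apply] at hj <;> omega
    have hfix : MvPolynomial.aeval g (binom K (intPos (u + v)) (intNeg (u + v))) =
        binom K (intPos (u + v)) (intNeg (u + v)) := by
      rw [binom, map_sub, aeval_monomial_id, aeval_monomial_id]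
      · intro j hjs
        rw [Finsupp.mem_support_iff, intNeg_apply] at hjs
        have := hwj j (by omega)
        simp [hg, this.1, this.2]
      · intro j hjs
        rw [Finsupp.mem_support_iff, intPos_apply] at hjs
        have := hwj j (by omega)
        simp [hg, this.1, this.2]
    intro hmem
    have hsub : Ideal.span {binom K (intPos u) (intNeg u), binom K (intPos v) (intNeg v)}
        ≤ RingHom.ker (MvPolynomial.aeval g).toRingHom := by
      rw [Ideal.span_le]
      rintro f (rfl | rfl)
      · exact hφf₁
      · exact hφf₂
    have h0 : MvPolynomial.aeval g (binom K (intPos (u + v)) (intNeg (u + v))) = 0 :=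
      hsub hmem
    rw [hfix] at h0
    refine binom_ne_zero ?_ h0
    intro hc
    apply huv'
    funext j
    have := DFunLike.congr_fun hc j
    rw [intPos_apply, intNeg_apply] at this
    simp only [Pi.add_apply, Pi.neg_apply] at this ⊢
    omega
  refine ⟨?_, key⟩
  rintro ⟨h1, h2⟩
  obtain ⟨hmem, hnmem⟩ := key h1 h2
  rw [hgen] at hmem
  exact hnmem hmem
end
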